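/- Fix constants b ≥ 1 and κ ∈ ℕ. Let {X_{k,i} : k ∈ {0, 1, …, b}, i ∈ ℕ} be a jointly independent family of identically distributed real-valued random variables with E = 0 and second moment 1. For d > κ, let L_d be the contrastive loss term computed from the full d-dimensional representations z_k^{(d)} = (X_{k,0}, …, X_{k,d−1}) and let L'_d be the contrastive loss term computed from the truncated representations z_{k,s}^{(d)} = (X_{k,0}, …, X_{k,d−κ−1}), where in each case the loss is exp(S(anchor, anchor)) / (exp(S(anchor, anchor)) + Σ_{k=1}^{b} exp(S(anchor, negative_k))) with S the cosine similarity under the zero-division convention, anchor the k = 0 vector, and negatives the k = 1, …, b vectors. Then L_d − L'_d converges to 0 in probability as d → ∞; that is, the contrastive loss of the ideal encoder and of the incomplete encoder converge to the same limit e/(e + b). -/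

import Mathlib

/-!
Etemadi's strong law of large numbers, applied to the identically distributed squares `X k i ^ 2`
and to the products `X 0 i * X k i` (`k ≠ 0`), pairwise independent in `i`, shows that almost
surely the empirical second moments of the coordinates tend to `1` and the empirical cross moments
tend to `0`. The cosine similarity of `z₀` and `z_k` is the ratio of the empirical cross moment to
the geometric mean of the empirical second moments, so almost surely the anchor similarity tends
to `1` and every negative similarity to `0`, and the loss tends to `e / (e + b)`, along `d` as
well as along `d - κ`. Almost sure convergence implies convergence in probability.
-/

open MeasureTheory ProbabilityTheory Filter Finset

/-- Cosine similarity of two vectors in Euclidean space, with the convention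
that division by zero yields `0` (which is the Lean convention for `/`). -/
noncomputable def cosSim {n : ℕ} (u v : EuclideanSpace ℝ (Fin n)) : ℝ :=
  (inner ℝ u v : ℝ) / (‖u‖ * ‖v‖)

/-- The random vector `(X 0, …, X (n-1)) ∈ ℝⁿ` built from a sequence of
real random variables; with `n = d` this is the full representation `z⁽ᵈ⁾`,
and with `n = d - κ` it is the truncated representation `z_s⁽ᵈ⁾`. -/
noncomputable def zvec {Ω : Type*} (X : ℕ → Ω → ℝ) (n : ℕ) (ω : Ω) :
    EuclideanSpace ℝ (Fin n) :=
  (WithLp.equiv 2 (Fin n → ℝ)).symm fun i => X i ω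

/-- The contrastive loss term
`exp(S(anchor,anchor)) / (exp(S(anchor,anchor)) + ∑_{k=1}^b exp(S(anchor,negative_k)))`
built from the first `n` coordinates of the representations `X k`, where the
anchor is the `k = 0` vector and the negatives are the `k = 1,…,b` vectors,
and `S` is cosine similarity with the zero-division convention. -/
noncomputable def contrastiveLoss {Ω : Type*} {b : ℕ}
    (X : Fin (b + 1) → ℕ → Ω → ℝ) (n : ℕ) (ω : Ω) : ℝ :=
  Real.exp (cosSim (zvec (X 0) n ω) (zvec (X 0) n ω)) /
    (Real.exp (cosSim (zvec (X 0) n ω) (zvec (X 0) n ω)) +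
      ∑ k ∈ Finset.Ioi (0 : Fin (b + 1)),
        Real.exp (cosSim (zvec (X 0) n ω) (zvec (X k) n ω)))

open scoped Topology

lemma AEMeasurable.cosSim {α : Type*} {mα : MeasurableSpace α} {μ : Measure α} {n : ℕ}
    {u v : α → EuclideanSpace ℝ (Fin n)} (hu : AEMeasurable u μ) (hv : AEMeasurable v μ) :
    AEMeasurable (fun a => cosSim (u a) (v a)) μ :=
  (hu.inner hv).div (hu.norm.mul hv.norm)

lemma aemeasurable_zvec {Ω : Type*} {mΩ : MeasurableSpace Ω} {μ : Measure Ω} {f : ℕ → Ω → ℝ}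
    (hf : ∀ i, AEMeasurable (f i) μ) (n : ℕ) : AEMeasurable (zvec f n) μ :=
  (WithLp.measurable_toLp 2 _).comp_aemeasurable (aemeasurable_pi_lambda _ fun i => hf i)

lemma aemeasurable_contrastiveLoss {Ω : Type*} {mΩ : MeasurableSpace Ω} {μ : Measure Ω} {b : ℕ}
    {X : Fin (b + 1) → ℕ → Ω → ℝ} (hX : ∀ k i, AEMeasurable (X k i) μ) (n : ℕ) :
    AEMeasurable (contrastiveLoss X n) μ := by
  have h (k : Fin (b + 1)) : AEMeasurable (fun ω => cosSim (zvec (X 0) n ω) (zvec (X k) n ω)) μ :=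
    (aemeasurable_zvec (hX 0) n).cosSim (aemeasurable_zvec (hX k) n)
  exact (h 0).exp.div ((h 0).exp.add (Finset.aemeasurable_fun_sum _ fun k _ => (h k).exp))

section CosineSimilarity

variable {Ω : Type*}

lemma cosSim_zvec_eq_avg (f g : ℕ → Ω → ℝ) (n : ℕ) (ω : Ω) :
    cosSim (zvec f n ω) (zvec g n ω) =
      ((n : ℝ)⁻¹ * ∑ i ∈ range n, f i ω * g i ω) /
        (√((n : ℝ)⁻¹ * ∑ i ∈ range n, f i ω ^ 2) * √((n : ℝ)⁻¹ * ∑ i ∈ range n, g i ω ^ 2)) := by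
  simp only [cosSim, zvec, PiLp.inner_apply, RCLike.inner_apply, conj_trivial,
    EuclideanSpace.norm_eq, WithLp.equiv_symm_apply, Real.norm_eq_abs, sq_abs]
  simp_rw [mul_comm (g _ ω) (f _ ω)]
  rw [Fin.sum_univ_eq_sum_range (fun i => f i ω * g i ω),
    Fin.sum_univ_eq_sum_range (fun i => f i ω ^ 2), Fin.sum_univ_eq_sum_range (fun i => g i ω ^ 2)]
  rcases n.eq_zero_or_pos with rfl | hn
  · simp
  have hc : (0 : ℝ) ≤ (n : ℝ)⁻¹ := by positivity
  rw [Real.sqrt_mul hc, Real.sqrt_mul hc, mul_mul_mul_comm, Real.mul_self_sqrt hc,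
    mul_div_mul_left _ _ (by positivity)]

lemma tendsto_cosSim_zvec {f g : ℕ → Ω → ℝ} {ω : Ω} {c s t : ℝ}
    (hfg : Tendsto (fun n : ℕ => (n : ℝ)⁻¹ * ∑ i ∈ range n, f i ω * g i ω) atTop (𝓝 c))
    (hf : Tendsto (fun n : ℕ => (n : ℝ)⁻¹ * ∑ i ∈ range n, f i ω ^ 2) atTop (𝓝 s))
    (hg : Tendsto (fun n : ℕ => (n : ℝ)⁻¹ * ∑ i ∈ range n, g i ω ^ 2) atTop (𝓝 t))
    (hs : 0 < s) (ht : 0 < t) :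
    Tendsto (fun n => cosSim (zvec f n ω) (zvec g n ω)) atTop (𝓝 (c / (√s * √t))) := by
  simp_rw [cosSim_zvec_eq_avg]
  exact hfg.div (hf.sqrt.mul hg.sqrt) (by positivity)

lemma tendsto_contrastiveLoss {b : ℕ} {X : Fin (b + 1) → ℕ → Ω → ℝ} {ω : Ω}
    (hsq : ∀ k, Tendsto (fun n : ℕ => (n : ℝ)⁻¹ * ∑ i ∈ range n, X k i ω ^ 2) atTop (𝓝 1))
    (hmul : ∀ k ≠ 0,
      Tendsto (fun n : ℕ => (n : ℝ)⁻¹ * ∑ i ∈ range n, X 0 i ω * X k i ω) atTop (𝓝 0)) :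
    Tendsto (fun n => contrastiveLoss X n ω) atTop (𝓝 (Real.exp 1 / (Real.exp 1 + b))) := by
  have hanchor : Tendsto (fun n => cosSim (zvec (X 0) n ω) (zvec (X 0) n ω)) atTop (𝓝 1) := by
    simpa using tendsto_cosSim_zvec (by simpa only [← sq] using hsq 0) (hsq 0) (hsq 0) one_pos
      one_pos
  have hnegative (k : Fin (b + 1)) (hk : k ≠ 0) :
      Tendsto (fun n => cosSim (zvec (X 0) n ω) (zvec (X k) n ω)) atTop (𝓝 0) := by
    simpa using tendsto_cosSim_zvec (hmul k hk) (hsq 0) (hsq k) one_pos one_pos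
  have hsum : Tendsto (fun n => ∑ k ∈ Ioi (0 : Fin (b + 1)),
      Real.exp (cosSim (zvec (X 0) n ω) (zvec (X k) n ω))) atTop (𝓝 b) := by
    simpa [Fin.card_Ioi] using
      tendsto_finsetSum (Ioi 0) fun k hk => (hnegative k (mem_Ioi.1 hk).ne').rexp
  exact hanchor.rexp.div (hanchor.rexp.add hsum) (by positivity)

end CosineSimilarity

section StrongLaw

variable {Ω : Type*} {mΩ : MeasurableSpace Ω} {μ : Measure Ω}

lemma strong_law_ae_comp {E : Type*} [MeasurableSpace E] {Y : ℕ → Ω → E} {φ : E → ℝ}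
    (hφ : Measurable φ) (hindep : Pairwise fun i j => IndepFun (Y i) (Y j) μ)
    (hident : ∀ i, IdentDistrib (Y i) (Y 0) μ μ) (hint : Integrable (fun ω => φ (Y 0 ω)) μ) :
    ∀ᵐ ω ∂μ, Tendsto (fun n : ℕ => (n : ℝ)⁻¹ * ∑ i ∈ range n, φ (Y i ω)) atTop
      (𝓝 (∫ ω, φ (Y 0 ω) ∂μ)) :=
  strong_law_ae (fun i ω => φ (Y i ω)) hint (fun _ _ hij => (hindep hij).comp hφ hφ)
    fun i => (hident i).comp hφ

variable {ι : Type*} {X : ι → ℕ → Ω → ℝ} {ξ : Ω → ℝ}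

lemma strong_law_ae_sq_of_iIndepFun (hindep : iIndepFun (fun p : ι × ℕ => X p.1 p.2) μ)
    (hident : ∀ k i, IdentDistrib (X k i) ξ μ μ) (hint : Integrable (fun ω => ξ ω ^ 2) μ)
    (k : ι) :
    ∀ᵐ ω ∂μ, Tendsto (fun n : ℕ => (n : ℝ)⁻¹ * ∑ i ∈ range n, X k i ω ^ 2) atTop
      (𝓝 (∫ ω, ξ ω ^ 2 ∂μ)) := by
  have hsq : Measurable fun x : ℝ => x ^ 2 := by fun_prop
  have hmoment : ∫ ω, X k 0 ω ^ 2 ∂μ = ∫ ω, ξ ω ^ 2 ∂μ := ((hident k 0).comp hsq).integral_eq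
  rw [← hmoment]
  exact strong_law_ae_comp (Y := X k) (φ := fun x => x ^ 2) hsq
    (fun i j hij => hindep.indepFun (show ((k, i) : ι × ℕ) ≠ (k, j) by simpa using hij))
    (fun i => (hident k i).trans (hident k 0).symm)
    (((hident k 0).comp hsq).integrable_iff.2 hint)

lemma strong_law_ae_mul_of_iIndepFun [IsFiniteMeasure μ]
    (hindep : iIndepFun (fun p : ι × ℕ => X p.1 p.2) μ)
    (hident : ∀ k i, IdentDistrib (X k i) ξ μ μ) (hint : Integrable ξ μ) {k l : ι} (hkl : k ≠ l) :
    ∀ᵐ ω ∂μ, Tendsto (fun n : ℕ => (n : ℝ)⁻¹ * ∑ i ∈ range n, X k i ω * X l i ω) atTop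
      (𝓝 ((∫ ω, ξ ω ∂μ) ^ 2)) := by
  have hX (p : ι × ℕ) : AEMeasurable (X p.1 p.2) μ := (hident p.1 p.2).aemeasurable_fst
  have hpair (i : ℕ) : IndepFun (X k i) (X l i) μ :=
    hindep.indepFun (show ((k, i) : ι × ℕ) ≠ (l, i) by simp [hkl])
  have hlim : ∫ ω, X k 0 ω * X l 0 ω ∂μ = (∫ ω, ξ ω ∂μ) ^ 2 := calc
    _ = (∫ ω, X k 0 ω ∂μ) * ∫ ω, X l 0 ω ∂μ :=
      (hpair 0).integral_mul_eq_mul_integral (hX (k, 0)).aestronglyMeasurable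
        (hX (l, 0)).aestronglyMeasurable
    _ = (∫ ω, ξ ω ∂μ) ^ 2 := by rw [(hident k 0).integral_eq, (hident l 0).integral_eq, sq]
  rw [← hlim]
  exact strong_law_ae_comp (Y := fun i ω => (X k i ω, X l i ω)) (φ := fun p => p.1 * p.2)
    (by fun_prop)
    (fun i j hij => hindep.indepFun_prodMk_prodMk₀ hX (k, i) (l, i) (k, j) (l, j)
      (by simp [hij]) (by simp [hkl]) (by simp [hkl.symm]) (by simp [hij]))
    (fun i => ((hident k i).trans (hident k 0).symm).prodMk
      ((hident l i).trans (hident l 0).symm) (hpair i) (hpair 0))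
    ((hpair 0).integrable_mul (((hident k 0).integrable_iff).2 hint)
      (((hident l 0).integrable_iff).2 hint))

end StrongLaw

lemma ae_tendsto_contrastiveLoss {Ω : Type*} {mΩ : MeasurableSpace Ω} {μ : Measure Ω}
    [IsFiniteMeasure μ] {b : ℕ} {X : Fin (b + 1) → ℕ → Ω → ℝ} {ξ : Ω → ℝ}
    (hindep : iIndepFun (fun p : Fin (b + 1) × ℕ => X p.1 p.2) μ)
    (hident : ∀ k i, IdentDistrib (X k i) ξ μ μ) (hint : Integrable (fun ω => ξ ω ^ 2) μ)
    (hmean : ∫ ω, ξ ω ∂μ = 0) (hsecond : ∫ ω, ξ ω ^ 2 ∂μ = 1) :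
    ∀ᵐ ω ∂μ, Tendsto (fun n => contrastiveLoss X n ω) atTop
      (𝓝 (Real.exp 1 / (Real.exp 1 + b))) := by
  have hξ : Integrable ξ μ :=
    ((memLp_two_iff_integrable_sq (hident 0 0).aemeasurable_snd.aestronglyMeasurable).2
      hint).integrable one_le_two
  have hsq := ae_all_iff.2 fun k => strong_law_ae_sq_of_iIndepFun hindep hident hint k
  have hmul := ae_all_iff.2 fun k : {k : Fin (b + 1) // k ≠ 0} =>
    strong_law_ae_mul_of_iIndepFun hindep hident hξ k.2.symm
  filter_upwards [hsq, hmul] with ω hsq hmul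
  exact tendsto_contrastiveLoss (by simpa only [hsecond] using hsq)
    fun k hk => by simpa [hmean] using hmul ⟨k, hk⟩

theorem contrastive_loss_ideal_sub_truncated_tendsto_zero_inProbability_general
    {Ω : Type*} {mΩ : MeasurableSpace Ω} (μ : Measure Ω) [IsProbabilityMeasure μ]
    (b : ℕ) (κ : ℕ)
    (X : Fin (b + 1) → ℕ → Ω → ℝ)
    (hindep : iIndepFun (fun p : Fin (b + 1) × ℕ => X p.1 p.2) μ)
    (hident : ∀ k i, IdentDistrib (X k i) (X 0 0) μ μ)
    (hint : Integrable (fun ω => (X 0 0 ω) ^ 2) μ)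
    (hmean : ∫ ω, X 0 0 ω ∂μ = 0)
    (hsecond : ∫ ω, (X 0 0 ω) ^ 2 ∂μ = 1) :
    TendstoInMeasure μ
      (fun (d : ℕ) ω => contrastiveLoss X d ω - contrastiveLoss X (d - κ) ω)
      atTop (fun _ => (0 : ℝ)) ∧
    TendstoInMeasure μ (fun (d : ℕ) ω => contrastiveLoss X d ω)
      atTop (fun _ => Real.exp 1 / (Real.exp 1 + b)) ∧
    TendstoInMeasure μ (fun (d : ℕ) ω => contrastiveLoss X (d - κ) ω)
      atTop (fun _ => Real.exp 1 / (Real.exp 1 + b)) := by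
  have hae := ae_tendsto_contrastiveLoss hindep hident hint hmean hsecond
  have hae_trunc : ∀ᵐ ω ∂μ, Tendsto (fun d => contrastiveLoss X (d - κ) ω) atTop
      (𝓝 (Real.exp 1 / (Real.exp 1 + b))) := by
    filter_upwards [hae] with ω h using h.comp (tendsto_sub_atTop_nat κ)
  have hmeas (n : ℕ) : AEStronglyMeasurable (contrastiveLoss X n) μ :=
    (aemeasurable_contrastiveLoss (fun k i => (hident k i).aemeasurable_fst) n)
      |>.aestronglyMeasurable
  refine ⟨tendstoInMeasure_of_tendsto_ae (fun d => (hmeas d).sub (hmeas (d - κ))) ?_,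
    tendstoInMeasure_of_tendsto_ae hmeas hae,
    tendstoInMeasure_of_tendsto_ae (fun d => hmeas (d - κ)) hae_trunc⟩
  filter_upwards [hae, hae_trunc] with ω h h_trunc
  simpa using h.sub h_trunc

/-- **The paper's Theorem 1.**
Fix `b ≥ 1` and a truncation constant `κ`.  Let `{X k i : k ∈ {0,…,b}, i ∈ ℕ}`
be a jointly independent family of identically distributed real random
variables with mean `0` and second moment `1`.  Let `L_d` be the contrastive
loss term computed from the full `d`-dimensional representations
`z_k⁽ᵈ⁾ = (X k 0, …, X k (d-1))` and `L'_d` the one computed from the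
truncated representations `z_{k,s}⁽ᵈ⁾ = (X k 0, …, X k (d-κ-1))`.  Then
`L_d − L'_d` converges to `0` in probability as `d → ∞`; that is, the
contrastive loss of the ideal encoder and of the incomplete encoder converge
to the same limit `e / (e + b)`. -/
theorem contrastive_loss_ideal_sub_truncated_tendsto_zero_inProbability
    {Ω : Type*} {mΩ : MeasurableSpace Ω} (μ : Measure Ω) [IsProbabilityMeasure μ]
    (b : ℕ) (hb : 1 ≤ b) (κ : ℕ)
    (X : Fin (b + 1) → ℕ → Ω → ℝ)
    (hmeas : ∀ k i, Measurable (X k i))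
    (hindep : iIndepFun (fun p : Fin (b + 1) × ℕ => X p.1 p.2) μ)
    (hident : ∀ k i, IdentDistrib (X k i) (X 0 0) μ μ)
    (hint : Integrable (fun ω => (X 0 0 ω) ^ 2) μ)
    (hmean : ∫ ω, X 0 0 ω ∂μ = 0)
    (hsecond : ∫ ω, (X 0 0 ω) ^ 2 ∂μ = 1) :
    TendstoInMeasure μ
      (fun (d : ℕ) ω => contrastiveLoss X d ω - contrastiveLoss X (d - κ) ω)
      atTop (fun _ => (0 : ℝ)) ∧
    TendstoInMeasure μ (fun (d : ℕ) ω => contrastiveLoss X d ω)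
      atTop (fun _ => Real.exp 1 / (Real.exp 1 + b)) ∧
    TendstoInMeasure μ (fun (d : ℕ) ω => contrastiveLoss X (d - κ) ω)
      atTop (fun _ => Real.exp 1 / (Real.exp 1 + b)) :=
  contrastive_loss_ideal_sub_truncated_tendsto_zero_inProbability_general (mΩ := mΩ) μ b κ X hindep
    hident hint hmean hsecond
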